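/- Let S = [0,1] ⊂ ℝ with a = ∞, constant friction b ∈ [0,∞) on S, and suppose (I_j) is a sequence of nonempty pairwise disjoint intervals with ∪_j I_j = S. Setting S^N = ∪_{j=1}^N I_j and d^N = d_{S^N,∞,b}, one has d^N(0,1) = ∞ for all N, while d(0,1) = b. Hence the monotone convergence d^N ↓ d can fail when a = ∞. -/

import Mathlib

open MeasureTheory Set Filter Topology ENNReal

noncomputable section

/-- A Lipschitz path in `ℝ` from `x` to `y` (parameterized on `[0,1]`). -/
def IsPath (x y : ℝ) (γ : ℝ → ℝ) : Prop :=
  (∃ K : NNReal, LipschitzWith K γ) ∧ γ 0 = x ∧ γ 1 = y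

/-- The urban metric of a network `T ⊆ ℝ` with friction `b` on `T` and `a` off `T`:
`d(x,y) = inf_γ ∫_{γ∩T} b dH¹ + a·H¹(γ\T)`. -/
def hausUrbanDist (T : Set ℝ) (a : ℝ≥0∞) (b : ℝ → ℝ≥0∞) (x y : ℝ) : ℝ≥0∞ :=
  ⨅ γ ∈ {γ | IsPath x y γ},
    (∫⁻ z in (γ '' Set.Icc (0 : ℝ) 1) ∩ T, b z ∂μH[1]) +
      a * μH[1] ((γ '' Set.Icc (0 : ℝ) 1) \ T)

/-- Any Lipschitz path from `0` to `1` has image containing `[0,1]`. -/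
lemma path_image_superset {γ : ℝ → ℝ} (h : IsPath 0 1 γ) :
    Set.Icc (0 : ℝ) 1 ⊆ γ '' Set.Icc (0 : ℝ) 1 := by
  obtain ⟨⟨K, hK⟩, h0, h1⟩ := h
  have hpc : IsPreconnected (γ '' Set.Icc (0 : ℝ) 1) :=
    isPreconnected_Icc.image γ hK.continuous.continuousOn
  have hoc := hpc.ordConnected
  have m0 : (0 : ℝ) ∈ γ '' Set.Icc (0 : ℝ) 1 :=
    ⟨0, Set.left_mem_Icc.2 zero_le_one, h0⟩
  have m1 : (1 : ℝ) ∈ γ '' Set.Icc (0 : ℝ) 1 :=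
    ⟨1, Set.right_mem_Icc.2 zero_le_one, h1⟩
  exact hoc.out m0 m1

lemma id_isPath : IsPath 0 1 (fun t : ℝ => t) :=
  ⟨⟨1, LipschitzWith.id⟩, rfl, rfl⟩

/-- An ordConnected subset of `ℝ` of Lebesgue measure zero is a subsingleton. -/
lemma ordConnected_volume_zero_subsingleton {s : Set ℝ} (hs : s.OrdConnected)
    (h0 : volume s = 0) : s.Subsingleton := by
  intro x hx y hy
  by_contra hxy
  rcases lt_or_gt_of_ne hxy with h | h
  · have : Set.Icc x y ⊆ s := hs.out hx hy
    have h1 : volume (Set.Icc x y) ≤ 0 := h0 ▸ measure_mono this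
    rw [Real.volume_Icc] at h1
    simp only [nonpos_iff_eq_zero, ENNReal.ofReal_eq_zero] at h1
    linarith
  · have : Set.Icc y x ⊆ s := hs.out hy hx
    have h1 : volume (Set.Icc y x) ≤ 0 := h0 ▸ measure_mono this
    rw [Real.volume_Icc] at h1
    simp only [nonpos_iff_eq_zero, ENNReal.ofReal_eq_zero] at h1
    linarith

/-- Removing an ordConnected set from an ordConnected set yields a union of two
ordConnected sets. -/
lemma diff_ordConnected (s I : Set ℝ) (hI : I.OrdConnected) :
    ∃ L U : Set ℝ, L.OrdConnected ∧ U.OrdConnected ∧ s \ I = (s ∩ L) ∪ (s ∩ U) := by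
  refine ⟨{x | ∀ y ∈ I, x < y}, {x | ∀ y ∈ I, y < x}, ?_, ?_, ?_⟩
  · exact ⟨fun x hx y hy z hz w hw => lt_of_le_of_lt hz.2 (hy w hw)⟩
  · exact ⟨fun x hx y hy z hz w hw => lt_of_lt_of_le (hx w hw) hz.1⟩
  · ext x
    constructor
    · rintro ⟨hxs, hxI⟩
      by_cases hL : ∀ y ∈ I, x < y
      · exact Or.inl ⟨hxs, hL⟩
      · refine Or.inr ⟨hxs, fun y hy => ?_⟩
        push_neg at hL
        obtain ⟨y1, hy1, hy1x⟩ := hL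
        by_contra hc
        push_neg at hc
        exact hxI (hI.out hy1 hy ⟨hy1x, hc⟩)
    · rintro (⟨hxs, hL⟩ | ⟨hxs, hU⟩)
      · exact ⟨hxs, fun hxI => lt_irrefl x (hL x hxI)⟩
      · exact ⟨hxs, fun hxI => lt_irrefl x (hU x hxI)⟩

/-- `[0,1]` minus finitely many ordConnected sets is a finite union of ordConnected sets. -/
lemma diff_finite_union_ordConnected (I : ℕ → Set ℝ) (hord : ∀ j, (I j).OrdConnected)
    (N : ℕ) :
    ∃ 𝒮 : Set (Set ℝ), 𝒮.Finite ∧ (∀ s ∈ 𝒮, s.OrdConnected) ∧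
      Set.Icc (0 : ℝ) 1 \ (⋃ j ∈ Finset.range N, I j) = ⋃₀ 𝒮 := by
  induction N with
  | zero =>
    refine ⟨{Set.Icc (0 : ℝ) 1}, Set.finite_singleton _, ?_, ?_⟩
    · intro s hs; rw [Set.mem_singleton_iff] at hs; subst hs; exact Set.ordConnected_Icc
    · simp
  | succ N ih =>
    obtain ⟨𝒮, hfin, hoc, heq⟩ := ih
    obtain ⟨L, U, hL, hU, hLU⟩ := diff_ordConnected Set.univ (I N) (hord N)
    refine ⟨((fun s => s ∩ L) '' 𝒮) ∪ ((fun s => s ∩ U) '' 𝒮),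
      (hfin.image _).union (hfin.image _), ?_, ?_⟩
    · rintro s (⟨t, ht, rfl⟩ | ⟨t, ht, rfl⟩)
      · exact (hoc t ht).inter hL
      · exact (hoc t ht).inter hU
    · have hstep : Set.Icc (0 : ℝ) 1 \ (⋃ j ∈ Finset.range (N + 1), I j)
          = (Set.Icc (0 : ℝ) 1 \ (⋃ j ∈ Finset.range N, I j)) \ I N := by
        rw [Finset.range_add_one]
        ext x
        simp only [Set.mem_diff, Set.mem_iUnion, Finset.mem_insert, Finset.mem_range]
        aesop
      rw [hstep, heq]
      have hRI : ∀ x : ℝ, x ∉ I N ↔ (x ∈ L ∨ x ∈ U) := by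
        intro x
        have := Set.ext_iff.1 hLU x
        simp only [Set.mem_diff, Set.mem_univ, true_and, Set.mem_union, Set.mem_inter_iff] at this
        exact this
      ext x
      simp only [Set.mem_diff, Set.mem_sUnion, Set.mem_union, Set.mem_image]
      constructor
      · rintro ⟨⟨t, ht, hxt⟩, hxI⟩
        rcases (hRI x).1 hxI with h | h
        · exact ⟨_, Or.inl ⟨t, ht, rfl⟩, hxt, h⟩
        · exact ⟨_, Or.inr ⟨t, ht, rfl⟩, hxt, h⟩
      · rintro ⟨s, (⟨t, ht, rfl⟩ | ⟨t, ht, rfl⟩), hxt, hx⟩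
        · exact ⟨⟨t, ht, hxt⟩, fun hI => lt_irrefl x (by
            have := (hRI x); by_contra _
            exact absurd ((Set.ext_iff.1 hLU x).2 (Or.inl ⟨Set.mem_univ x, hx⟩)).2 (fun h => h hI))⟩
        · exact ⟨⟨t, ht, hxt⟩,
            ((Set.ext_iff.1 hLU x).2 (Or.inr ⟨Set.mem_univ x, hx⟩)).2⟩

/-- with `S = [0,1]`, `a = ∞`, constant friction `b < ∞`, and `S` split into a
sequence of nonempty pairwise disjoint intervals `I_j`, the metrics `d^N` of the partial
networks `S^N = ∪_{j<N} I_j` satisfy `d^N(0,1) = ∞` for all `N`, whereas `d(0,1) = b`: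
monotone convergence `d^N ↓ d` fails for `a = ∞`. -/
theorem approximating_sequence_counterexample (b : ℝ≥0∞) (hb : b ≠ ⊤)
    (I : ℕ → Set ℝ) (hne : ∀ j, (I j).Nonempty) (hord : ∀ j, (I j).OrdConnected)
    (hdisj : Pairwise (Function.onFun Disjoint I)) (hcover : (⋃ j, I j) = Set.Icc (0 : ℝ) 1) :
    (∀ N : ℕ,
        hausUrbanDist (⋃ j ∈ Finset.range N, I j) ⊤ (fun _ => b) 0 1 = ⊤) ∧
      hausUrbanDist (Set.Icc (0 : ℝ) 1) ⊤ (fun _ => b) 0 1 = b := by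
  have hH : (μH[1] : Measure ℝ) = volume := MeasureTheory.hausdorffMeasure_real
  constructor
  · -- d^N = ⊤
    intro N
    -- the complement has positive measure
    have hpos : volume (Set.Icc (0 : ℝ) 1 \ ⋃ j ∈ Finset.range N, I j) ≠ 0 := by
      intro h0
      obtain ⟨𝒮, hfin, hoc, heq⟩ := diff_finite_union_ordConnected I hord N
      -- if measure zero, the set is finite
      have hfinset : (Set.Icc (0 : ℝ) 1 \ ⋃ j ∈ Finset.range N, I j).Finite := by
        rw [heq]
        refine Set.Finite.sUnion hfin (fun s hs => ?_)
        have : volume s = 0 := by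
          refine le_antisymm ?_ zero_le
          calc volume s ≤ volume (⋃₀ 𝒮) := measure_mono (Set.subset_sUnion_of_mem hs)
          _ = 0 := by rw [← heq, h0]
        exact ((ordConnected_volume_zero_subsingleton (hoc s hs) this)).finite
      -- but it is infinite: one point from each `I j`, `j ≥ N`
      set f : ℕ → ℝ := fun n => (hne (N + n)).some with hf
      have hmem : ∀ n, f n ∈ Set.Icc (0 : ℝ) 1 \ ⋃ j ∈ Finset.range N, I j := by
        intro n
        have hfI : f n ∈ I (N + n) := (hne (N + n)).some_mem
        constructor
        · rw [← hcover]; exact Set.mem_iUnion.2 ⟨N + n, hfI⟩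
        · intro hmem
          simp only [Set.mem_iUnion, Finset.mem_range] at hmem
          obtain ⟨j, hj, hxj⟩ := hmem
          have hne' : j ≠ N + n := by omega
          exact (hdisj hne').le_bot ⟨hxj, hfI⟩
      have hinj : Function.Injective f := by
        intro m n hmn
        by_contra hc
        have hne' : N + m ≠ N + n := by omega
        refine (hdisj hne').le_bot ⟨(hne (N + m)).some_mem, ?_⟩
        show f m ∈ I (N + n)
        rw [hmn]
        exact (hne (N + n)).some_mem
      exact (Set.infinite_of_injective_forall_mem hinj hmem) hfinset
    rw [hausUrbanDist]
    rw [iInf_eq_top]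
    intro γ
    rw [iInf_eq_top]
    intro hγ
    have himg : Set.Icc (0 : ℝ) 1 ⊆ γ '' Set.Icc (0 : ℝ) 1 := path_image_superset hγ
    have hsub : (Set.Icc (0 : ℝ) 1 \ ⋃ j ∈ Finset.range N, I j)
        ⊆ (γ '' Set.Icc (0 : ℝ) 1) \ ⋃ j ∈ Finset.range N, I j :=
      Set.diff_subset_diff_left himg
    have hμ : μH[1] ((γ '' Set.Icc (0 : ℝ) 1) \ ⋃ j ∈ Finset.range N, I j) ≠ 0 := by
      rw [hH]
      intro h
      exact hpos (le_antisymm (h ▸ measure_mono hsub) zero_le)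
    rw [ENNReal.top_mul hμ]
    exact add_top _
  · -- d = b
    apply le_antisymm
    · -- upper bound: the identity path
      rw [hausUrbanDist]
      refine le_trans (iInf₂_le (fun t : ℝ => t) id_isPath) ?_
      have himg : (fun t : ℝ => t) '' Set.Icc (0 : ℝ) 1 = Set.Icc (0 : ℝ) 1 :=
        Set.image_id _
      rw [himg, Set.inter_self, Set.diff_self, measure_empty, mul_zero, add_zero,
        MeasureTheory.setLIntegral_const, hH, Real.volume_Icc]
      simp
    · -- lower bound
      rw [hausUrbanDist]
      refine le_iInf₂ (fun γ hγ => ?_)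
      have himg : Set.Icc (0 : ℝ) 1 ⊆ (γ '' Set.Icc (0 : ℝ) 1) ∩ Set.Icc (0 : ℝ) 1 :=
        Set.subset_inter (path_image_superset hγ) Set.Subset.rfl
      have h1 : b ≤ ∫⁻ z in (γ '' Set.Icc (0 : ℝ) 1) ∩ Set.Icc (0 : ℝ) 1,
          (fun _ => b) z ∂μH[1] := by
        have : (∫⁻ _ in Set.Icc (0 : ℝ) 1, b ∂μH[1]) ≤
            ∫⁻ _ in (γ '' Set.Icc (0 : ℝ) 1) ∩ Set.Icc (0 : ℝ) 1, b ∂μH[1] :=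
          lintegral_mono' (Measure.restrict_mono himg le_rfl) le_rfl
        refine le_trans ?_ this
        rw [MeasureTheory.setLIntegral_const, hH, Real.volume_Icc]
        simp
      exact le_trans h1 le_self_add
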